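/- arXiv:2212.01051 — 9 statements merged into one kernel-verified Lean document; each statement's English description precedes it below -/
import Mathlib

section
/- (Soundness of VeriX) Let π be any enumeration (permutation) of Fin d, and let B be the set produced by the VeriX procedure (starting from B = ∅ and adding each index i in order of π exactly when B ∪ {i} is irrelevant for (f, x, ε, δ)). Then A := Fin d \ B is a robust explanation: any perturbation of the features in B by at most ε coordinatewise, with features in A fixed, changes f's output by at most δ. -/
def Irrelevant {d : ℕ} (f : (Fin d → ℝ) → ℝ) (x : Fin d → ℝ) (ε δ : ℝ)
    (B : Set (Fin d)) : Prop :=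
  ∀ x' : Fin d → ℝ, (∀ i ∈ B, |x' i - x i| ≤ ε) → (∀ i ∉ B, x' i = x i) →
    |f x' - f x| ≤ δ

def RobustExpl {d : ℕ} (f : (Fin d → ℝ) → ℝ) (x : Fin d → ℝ) (ε δ : ℝ)
    (A : Set (Fin d)) : Prop :=
  ∀ x' : Fin d → ℝ, (∀ i ∈ A, x' i = x i) → (∀ i ∉ A, |x' i - x i| ≤ ε) →
    |f x' - f x| ≤ δ

open scoped Classical in
noncomputable def verixB {d : ℕ} (f : (Fin d → ℝ) → ℝ) (x : Fin d → ℝ) (ε δ : ℝ)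
    (π : List (Fin d)) : Finset (Fin d) :=
  π.foldl (fun B i => if Irrelevant f x ε δ ↑(insert i B) then insert i B else B) ∅

open scoped Classical in
lemma foldl_irrel {d : ℕ} (f : (Fin d → ℝ) → ℝ) (x : Fin d → ℝ) (ε δ : ℝ)
    (l : List (Fin d)) (B : Finset (Fin d)) (hB : Irrelevant f x ε δ ↑B) :
    Irrelevant f x ε δ
      ↑(l.foldl (fun (B : Finset (Fin d)) i => if Irrelevant f x ε δ ↑(insert i B) then insert i B else B) B) := by
  induction l generalizing B with
  | nil => exact hB
  | cons a t ih =>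
    simp only [List.foldl_cons]
    by_cases h : Irrelevant f x ε δ ↑(insert a B)
    · rw [if_pos h]; exact ih _ h
    · rw [if_neg h]; exact ih _ hB

theorem stmt6 {d : ℕ} (f : (Fin d → ℝ) → ℝ) (x : Fin d → ℝ) (ε δ : ℝ)
    (hδ : 0 ≤ δ) (π : List (Fin d)) (hnodup : π.Nodup) (hall : ∀ i : Fin d, i ∈ π) :
    RobustExpl f x ε δ ↑(Finset.univ \ verixB f x ε δ π) := by
  intro x' h1 h2
  have hB : Irrelevant f x ε δ ↑(verixB f x ε δ π) := by
    apply foldl_irrel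
    intro x' _ h
    have : x' = x := funext fun i => h i (by simp)
    simpa [this] using hδ
  apply hB x'
  · intro i hi
    exact h2 i (by simp [hi])
  · intro i hi
    exact h1 i (by simp [hi])
end

section
/- (Optimality of VeriX) Let B be the final irrelevant set produced by the VeriX procedure and A = Fin d \ B the returned explanation. Then for every index i ∈ A, the set B ∪ {i} is NOT irrelevant; i.e., there exists an input x' with |x' j − x j| ≤ ε for all j ∈ B ∪ {i} and x' j = x j for all j ∉ B ∪ {i} such that |f x' − f x| > δ. -/
def greedyExtend {α : Type*} [DecidableEq α] (P : Finset α → Prop) [DecidablePred P]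
    (B : Finset α) (l : List α) : Finset α :=
  l.foldl (fun B i => if P (insert i B) then insert i B else B) B

section GreedyExtend

variable {α : Type*} [DecidableEq α] {P : Finset α → Prop} [DecidablePred P]

theorem greedyExtend_cons (B : Finset α) (a : α) (l : List α) :
    greedyExtend P B (a :: l) =
      greedyExtend P (if P (insert a B) then insert a B else B) l := rfl

theorem subset_greedyExtend (B : Finset α) (l : List α) : B ⊆ greedyExtend P B l := by
  induction l generalizing B with
  | nil => rfl
  | cons a l ih =>
    rw [greedyExtend_cons]
    refine subset_trans ?_ (ih _)
    split_ifs
    exacts [Finset.subset_insert a B, subset_rfl]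

/-- A rejected element was tested against a subset of the final set, and `P` is downward closed. -/
theorem not_insert_greedyExtend (hP : Antitone P) {B : Finset α} {l : List α} {i : α}
    (hil : i ∈ l) (hi : i ∉ greedyExtend P B l) : ¬P (insert i (greedyExtend P B l)) := by
  induction l generalizing B with
  | nil => simp at hil
  | cons a l ih =>
    rw [greedyExtend_cons] at hi ⊢
    obtain rfl | hil := List.mem_cons.mp hil
    · by_cases hiB : P (insert i B)
      · rw [if_pos hiB] at hi
        exact absurd (subset_greedyExtend _ l (Finset.mem_insert_self i B)) hi
      · rw [if_neg hiB] at hi ⊢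
        exact fun h => hiB (hP (Finset.insert_subset_insert i (subset_greedyExtend B l)) h)
    · exact ih hil hi

end GreedyExtend

theorem irrelevant_antitone {d : ℕ} (f : (Fin d → ℝ) → ℝ) (x : Fin d → ℝ) {ε : ℝ} (δ : ℝ)
    (hε : 0 ≤ ε) : Antitone (Irrelevant f x ε δ) := by
  intro B B' hBB' hB' x' hB hnB
  refine hB' x' (fun i hi => ?_) (fun i hi => hnB i (fun h => hi (hBB' h)))
  by_cases hiB : i ∈ B
  · exact hB i hiB
  · simpa only [hnB i hiB, sub_self, abs_zero] using hε

open scoped Classical in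
theorem verixB_eq_greedyExtend {d : ℕ} (f : (Fin d → ℝ) → ℝ) (x : Fin d → ℝ) (ε δ : ℝ)
    (π : List (Fin d)) :
    verixB f x ε δ π = greedyExtend (fun B : Finset (Fin d) => Irrelevant f x ε δ ↑B) ∅ π :=
  rfl

theorem stmt7_general {d : ℕ} (f : (Fin d → ℝ) → ℝ) (x : Fin d → ℝ) (ε δ : ℝ)
    (hε : 0 ≤ ε) (π : List (Fin d))
    (hall : ∀ i : Fin d, i ∈ π) :
    ∀ i ∈ Finset.univ \ verixB f x ε δ π,
      ∃ x' : Fin d → ℝ,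
        (∀ j ∈ insert i (verixB f x ε δ π), |x' j - x j| ≤ ε) ∧
        (∀ j ∉ insert i (verixB f x ε δ π), x' j = x j) ∧
        δ < |f x' - f x| := by
  intro i hi
  classical
  have hfail : ¬Irrelevant f x ε δ ↑(insert i (verixB f x ε δ π)) := by
    rw [verixB_eq_greedyExtend] at hi ⊢
    exact not_insert_greedyExtend ((irrelevant_antitone f x δ hε).comp_monotone
      fun _ _ => Finset.coe_subset.mpr) (hall i) (Finset.mem_sdiff.mp hi).2
  simpa only [Irrelevant, Finset.mem_coe, not_forall, not_le, exists_prop] using hfail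

theorem stmt7 {d : ℕ} (f : (Fin d → ℝ) → ℝ) (x : Fin d → ℝ) (ε δ : ℝ)
    (hε : 0 ≤ ε) (hδ : 0 ≤ δ) (π : List (Fin d)) (hnodup : π.Nodup)
    (hall : ∀ i : Fin d, i ∈ π) :
    ∀ i ∈ Finset.univ \ verixB f x ε δ π,
      ∃ x' : Fin d → ℝ,
        (∀ j ∈ insert i (verixB f x ε δ π), |x' j - x j| ≤ ε) ∧
        (∀ j ∉ insert i (verixB f x ε δ π), x' j = x j) ∧
        δ < |f x' - f x| :=
  stmt7_general f x ε δ hε π hall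
end

section
/- The explanation A returned by VeriX is a minimal robust explanation with respect to set inclusion among sets of the form Fin d \ B' with B' ⊇ B obtained by moving a single element of A into B: for every i ∈ A, the set A \ {i} is not a robust explanation for (f, x, ε, δ). -/
open scoped Classical in
noncomputable def vstep {d : ℕ} (f : (Fin d → ℝ) → ℝ) (x : Fin d → ℝ) (ε δ : ℝ)
    (B : Finset (Fin d)) (i : Fin d) : Finset (Fin d) :=
  if Irrelevant f x ε δ ↑(insert i B) then insert i B else B

lemma verixB_eq {d : ℕ} (f : (Fin d → ℝ) → ℝ) (x : Fin d → ℝ) (ε δ : ℝ)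
    (π : List (Fin d)) : verixB f x ε δ π = π.foldl (vstep f x ε δ) ∅ := rfl

lemma irrel_mono {d : ℕ} {f : (Fin d → ℝ) → ℝ} {x : Fin d → ℝ} {ε δ : ℝ}
    (hε : 0 ≤ ε) {B B' : Set (Fin d)} (hsub : B' ⊆ B)
    (h : Irrelevant f x ε δ B) : Irrelevant f x ε δ B' := by
  intro x' h1 h2
  apply h x'
  · intro i hi
    by_cases hib : i ∈ B'
    · exact h1 i hib
    · rw [h2 i hib]; simpa using hε
  · intro i hi
    exact h2 i (fun h' => hi (hsub h'))

lemma foldl_mono {d : ℕ} (f : (Fin d → ℝ) → ℝ) (x : Fin d → ℝ) (ε δ : ℝ)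
    (l : List (Fin d)) (B0 : Finset (Fin d)) :
    B0 ⊆ l.foldl (vstep f x ε δ) B0 := by
  induction l generalizing B0 with
  | nil => simp
  | cons a t ih =>
    simp only [List.foldl_cons]
    refine subset_trans ?_ (ih _)
    unfold vstep
    split <;> simp [Finset.subset_insert]

lemma foldl_key {d : ℕ} (f : (Fin d → ℝ) → ℝ) (x : Fin d → ℝ) (ε δ : ℝ)
    (hε : 0 ≤ ε) (l : List (Fin d)) (B0 : Finset (Fin d)) (i : Fin d)
    (hil : i ∈ l)
    (hout : i ∉ l.foldl (vstep f x ε δ) B0) :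
    ¬ Irrelevant f x ε δ ↑(insert i (l.foldl (vstep f x ε δ) B0)) := by
  induction l generalizing B0 with
  | nil => simp at hil
  | cons a t ih =>
    simp only [List.foldl_cons] at hout ⊢
    by_cases hia : i = a
    · subst hia
      by_cases htest : Irrelevant f x ε δ ↑(insert i B0)
      · exfalso
        apply hout
        have : vstep f x ε δ B0 i = insert i B0 := if_pos htest
        rw [this]
        exact foldl_mono f x ε δ t _ (Finset.mem_insert_self i B0)
      · have hstep : vstep f x ε δ B0 i = B0 := if_neg htest
        rw [hstep] at hout ⊢
        intro hcon
        apply htest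
        apply irrel_mono hε ?_ hcon
        intro j hj
        simp only [Finset.coe_insert, Set.mem_insert_iff, Finset.mem_coe] at hj ⊢
        rcases hj with h | h
        · exact Or.inl h
        · exact Or.inr (foldl_mono f x ε δ t _ h)
    · rcases List.mem_cons.mp hil with h | h
      · exact absurd h hia
      · exact ih _ h hout

theorem stmt8 {d : ℕ} (f : (Fin d → ℝ) → ℝ) (x : Fin d → ℝ) (ε δ : ℝ)
    (hε : 0 ≤ ε) (hδ : 0 ≤ δ) (π : List (Fin d)) (hnodup : π.Nodup)
    (hall : ∀ i : Fin d, i ∈ π) :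
    ∀ i ∈ Finset.univ \ verixB f x ε δ π,
      ¬ RobustExpl f x ε δ ↑((Finset.univ \ verixB f x ε δ π) \ {i}) := by
  classical
  intro i hi hrob
  rw [verixB_eq] at hi hrob
  have hiB : i ∉ π.foldl (vstep f x ε δ) ∅ := (Finset.mem_sdiff.mp hi).2
  have hkey := foldl_key f x ε δ hε π ∅ i (hall i) hiB
  apply hkey
  set B := π.foldl (vstep f x ε δ) ∅ with hB
  intro x' h1 h2
  apply hrob x'
  · intro j hj
    simp only [Finset.coe_sdiff, Finset.coe_univ, Set.mem_diff, Finset.mem_coe,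
      Finset.coe_singleton, Set.mem_singleton_iff] at hj
    apply h2
    simp only [Finset.coe_insert, Set.mem_insert_iff, Finset.mem_coe]
    push_neg
    exact ⟨hj.2, hj.1.2⟩
  · intro j hj
    simp only [Finset.coe_sdiff, Finset.coe_univ, Set.mem_diff, Finset.mem_coe,
      Finset.coe_singleton, Set.mem_singleton_iff, not_and, not_not] at hj
    apply h1
    simp only [Finset.coe_insert, Set.mem_insert_iff, Finset.mem_coe]
    by_cases hjB : j ∈ B
    · exact Or.inr hjB
    · exact Or.inl (hj ⟨Set.mem_univ j, hjB⟩)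
end

section
/- (Counterfactual existence) If the VeriX procedure is run with a sound and complete irrelevance oracle, then for every feature i in the returned explanation A there exists a counterfactual: an input m with |m j − x j| ≤ ε for all j in B_i ∪ {i} (where B_i is the irrelevant set at the time i was examined), m j = x j for j ∉ B_i ∪ {i}, and |f m − f x| > δ. Moreover, since B_i ⊆ B_final, m perturbs only coordinates in B_final ∪ {i}, i.e. |m j − x j| ≤ ε for all j ∈ B_final ∪ {i} and m j = x j for all j ∉ B_final ∪ {i}, and m changes the output by more than δ. -/
open scoped Classical in
lemma foldl_mono_s12 {d : ℕ} (f : (Fin d → ℝ) → ℝ) (x : Fin d → ℝ) (ε δ : ℝ) :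
    ∀ (l : List (Fin d)) (B : Finset (Fin d)),
      B ⊆ l.foldl (fun B i => if Irrelevant f x ε δ ↑(insert i B) then insert i B else B) B := by
  intro l
  induction l with
  | nil => intro B; simp
  | cons a l ih =>
    intro B
    simp only [List.foldl_cons]
    refine subset_trans ?_ (ih _)
    split <;> simp [Finset.subset_insert]

theorem stmt12 {d : ℕ} (f : (Fin d → ℝ) → ℝ) (x : Fin d → ℝ) (ε δ : ℝ)
    (hε : 0 ≤ ε) (hδ : 0 ≤ δ) (π l₁ l₂ : List (Fin d)) (i : Fin d)
    (hnodup : π.Nodup) (hall : ∀ j : Fin d, j ∈ π)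
    (hsplit : π = l₁ ++ i :: l₂) (hiA : i ∉ verixB f x ε δ π) :
    ∃ m : Fin d → ℝ,
      (∀ j ∈ insert i (verixB f x ε δ l₁), |m j - x j| ≤ ε) ∧
      (∀ j ∉ insert i (verixB f x ε δ l₁), m j = x j) ∧
      (∀ j ∈ insert i (verixB f x ε δ π), |m j - x j| ≤ ε) ∧
      (∀ j ∉ insert i (verixB f x ε δ π), m j = x j) ∧
      δ < |f m - f x| := by
  classical
  set step := fun (B : Finset (Fin d)) (j : Fin d) =>
    if Irrelevant f x ε δ ↑(insert j B) then insert j B else B with hstep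
  set B₁ := verixB f x ε δ l₁ with hB₁
  have hfold : verixB f x ε δ π = l₂.foldl step (step B₁ i) := by
    simp [verixB, hsplit, List.foldl_append, hB₁, hstep]
  have hrej : ¬ Irrelevant f x ε δ ↑(insert i B₁) := by
    intro h
    apply hiA
    rw [hfold]
    have : step B₁ i = insert i B₁ := if_pos h
    rw [this]
    exact foldl_mono_s12 f x ε δ l₂ _ (Finset.mem_insert_self i B₁)
  have hstepB : step B₁ i = B₁ := if_neg hrej
  have hsub : B₁ ⊆ verixB f x ε δ π := by
    rw [hfold, hstepB]; exact foldl_mono_s12 f x ε δ l₂ B₁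
  simp only [Irrelevant, not_forall] at hrej
  obtain ⟨m, h1, h2, h3⟩ := hrej
  refine ⟨m, ?_, ?_, ?_, ?_, not_le.mp h3⟩
  · intro j hj; exact h1 j (by simpa using hj)
  · intro j hj; exact h2 j (by simpa using hj)
  · intro j hj
    by_cases hj1 : j ∈ insert i B₁
    · exact h1 j (by simpa using hj1)
    · rw [h2 j (by simpa using hj1)]; simpa using hε
  · intro j hj
    apply h2 j
    simp only [Finset.coe_insert, Set.mem_insert_iff, Finset.mem_coe]
    rintro (rfl | hmem)
    · exact hj (Finset.mem_insert_self j _)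
    · exact hj (Finset.mem_insert_of_mem (hsub hmem))
end

section
/- For a linear model f(x) = ∑ i, w i * x i + b, a set B ⊆ Fin d is irrelevant for (f, x, ε, δ) (with coordinatewise ε-perturbations) if and only if ε · ∑_{i ∈ B} |w i| ≤ δ. -/
theorem stmt14 {d : ℕ} (w : Fin d → ℝ) (b : ℝ) (x : Fin d → ℝ) (ε δ : ℝ)
    (hε : 0 < ε) (hδ : 0 ≤ δ) (B : Finset (Fin d)) :
    Irrelevant (fun y => (∑ i, w i * y i) + b) x ε δ ↑B ↔
      ε * ∑ i ∈ B, |w i| ≤ δ := by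
  classical
  have key : ∀ x' : Fin d → ℝ,
      ((∑ i, w i * x' i) + b) - ((∑ i, w i * x i) + b)
        = ∑ i, w i * (x' i - x i) := by
    intro x'
    simp only [mul_sub, Finset.sum_sub_distrib]
    ring
  constructor
  · intro h
    set x' : Fin d → ℝ := fun i =>
      if i ∈ B then x i + ε * (if 0 ≤ w i then 1 else -1) else x i with hx'
    have h1 : ∀ i ∈ (B : Set (Fin d)), |x' i - x i| ≤ ε := by
      intro i hi
      simp only [hx', hi, if_pos (Finset.mem_coe.mp hi)]
      rw [add_sub_cancel_left]
      rw [abs_mul]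
      rcases le_or_gt 0 (w i) with hw | hw
      · simp [hw, abs_of_pos hε]
      · simp [not_le.mpr hw, abs_of_pos hε]
    have h2 : ∀ i ∉ (B : Set (Fin d)), x' i = x i := by
      intro i hi
      simp [hx', Finset.mem_coe.not.mp hi]
    have := h x' h1 h2
    simp only at this
    rw [key] at this
    have hsum : ∑ i, w i * (x' i - x i) = ε * ∑ i ∈ B, |w i| := by
      rw [← Finset.sum_subset (Finset.subset_univ B)]
      · rw [Finset.mul_sum]
        apply Finset.sum_congr rfl
        intro i hi
        simp only [hx', if_pos hi, add_sub_cancel_left]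
        rcases le_or_gt 0 (w i) with hw | hw
        · rw [abs_of_nonneg hw]; simp [hw]; ring
        · rw [abs_of_neg hw]; simp [not_le.mpr hw]; ring
      · intro i _ hi
        simp [hx', hi]
    rw [hsum] at this
    exact le_trans (le_abs_self _) this
  · intro h x' h1 h2
    simp only
    rw [key]
    have : ∑ i, w i * (x' i - x i) = ∑ i ∈ B, w i * (x' i - x i) := by
      rw [← Finset.sum_subset (Finset.subset_univ B)]
      intro i _ hi
      rw [h2 i (by simpa using hi)]
      ring
    rw [this]
    calc |∑ i ∈ B, w i * (x' i - x i)| ≤ ∑ i ∈ B, |w i * (x' i - x i)| :=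
          Finset.abs_sum_le_sum_abs _ _
    _ ≤ ∑ i ∈ B, |w i| * ε := by
          apply Finset.sum_le_sum
          intro i hi
          rw [abs_mul]
          exact mul_le_mul_of_nonneg_left (h1 i (by simpa using hi)) (abs_nonneg _)
    _ = ε * ∑ i ∈ B, |w i| := by rw [Finset.mul_sum]; apply Finset.sum_congr rfl; intros; ring
    _ ≤ δ := h
end

section
/- For a linear model f(x) = ∑ i, w i * x i + b with ε > 0, the explanation A returned by VeriX with any traversal order satisfies: A is a robust explanation and for every i ∈ A, ε · (|w i| + ∑_{j ∈ B} |w j|) > δ, where B = Fin d \ A. -/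
open scoped Classical

lemma lin_diff {d : ℕ} (w : Fin d → ℝ) (b : ℝ) (x x' : Fin d → ℝ) :
    ((∑ k, w k * x' k) + b) - ((∑ k, w k * x k) + b)
      = ∑ k, w k * (x' k - x k) := by
  rw [Finset.sum_congr rfl (fun k _ => mul_sub (w k) (x' k) (x k)),
    Finset.sum_sub_distrib]
  ring

lemma irrel_iff {d : ℕ} (w : Fin d → ℝ) (b : ℝ) (x : Fin d → ℝ) (ε δ : ℝ)
    (hε : 0 < ε) (S : Finset (Fin d)) :
    Irrelevant (fun y => (∑ k, w k * y k) + b) x ε δ ↑S ↔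
      ε * ∑ j ∈ S, |w j| ≤ δ := by
  constructor
  · intro h
    set x' : Fin d → ℝ := fun j => if j ∈ S then x j + ε * Real.sign (w j) else x j
      with hx'
    have h1 : ∀ i ∈ (↑S : Set (Fin d)), |x' i - x i| ≤ ε := by
      intro i hi
      simp only [hx', Finset.mem_coe.mp hi, if_pos, add_sub_cancel_left]
      rw [abs_mul]
      calc |ε| * |Real.sign (w i)| ≤ |ε| * 1 := by
            exact mul_le_mul_of_nonneg_left (by
              rcases Real.sign_apply_eq (w i) with h | h | h <;> simp [h]) (abs_nonneg _)
        _ = ε := by rw [mul_one, abs_of_pos hε]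
    have h2 : ∀ i ∉ (↑S : Set (Fin d)), x' i = x i := by
      intro i hi
      simp only [hx']
      rw [if_neg (by simpa using hi)]
    have := h x' h1 h2
    have hdiff : ((∑ k, w k * x' k) + b) - ((∑ k, w k * x k) + b)
        = ε * ∑ j ∈ S, |w j| := by
      rw [lin_diff]
      rw [Finset.mul_sum]
      rw [← Finset.sum_subset (Finset.subset_univ S)
        (by intro k _ hk; simp [hx', hk])]
      refine Finset.sum_congr rfl fun k hk => ?_
      simp only [hx', if_pos hk, add_sub_cancel_left]
      have : w k * Real.sign (w k) = |w k| := by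
        rcases lt_trichotomy (w k) 0 with h | h | h
        · rw [Real.sign_of_neg h, abs_of_neg h]; ring
        · simp [h]
        · rw [Real.sign_of_pos h, abs_of_pos h]; ring
      rw [show w k * (ε * Real.sign (w k)) = ε * (w k * Real.sign (w k)) by ring, this]
    have ht := this
    simp only at ht
    rw [hdiff] at ht
    exact le_trans (le_abs_self _) ht
  · intro h x' h1 h2
    have hdiff : ((∑ k, w k * x' k) + b) - ((∑ k, w k * x k) + b)
        = ∑ k ∈ S, w k * (x' k - x k) := by
      rw [lin_diff]
      exact (Finset.sum_subset (Finset.subset_univ S)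
        (by intro k _ hk; rw [h2 k (by simpa using hk)]; ring)).symm
    simp only
    rw [hdiff]
    calc |∑ k ∈ S, w k * (x' k - x k)| ≤ ∑ k ∈ S, |w k * (x' k - x k)| :=
          Finset.abs_sum_le_sum_abs _ _
      _ ≤ ∑ k ∈ S, |w k| * ε := by
          refine Finset.sum_le_sum fun k hk => ?_
          rw [abs_mul]
          exact mul_le_mul_of_nonneg_left (h1 k (by simpa using hk)) (abs_nonneg _)
      _ = ε * ∑ j ∈ S, |w j| := by rw [← Finset.sum_mul]; ring
      _ ≤ δ := h

section fold
variable {d : ℕ} (f : (Fin d → ℝ) → ℝ) (x : Fin d → ℝ) (ε δ : ℝ)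

noncomputable def step : Finset (Fin d) → Fin d → Finset (Fin d) :=
  fun B i => if Irrelevant f x ε δ ↑(insert i B) then insert i B else B

lemma subset_step (B : Finset (Fin d)) (i : Fin d) : B ⊆ step f x ε δ B i := by
  unfold step; split <;> simp [Finset.subset_insert]

lemma subset_foldl (l : List (Fin d)) (B : Finset (Fin d)) :
    B ⊆ l.foldl (step f x ε δ) B := by
  induction l generalizing B with
  | nil => simp
  | cons a t ih => exact (subset_step f x ε δ B a).trans (ih _)

lemma irrel_foldl (l : List (Fin d)) (B : Finset (Fin d))
    (hB : Irrelevant f x ε δ ↑B) :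
    Irrelevant f x ε δ ↑(l.foldl (step f x ε δ) B) := by
  induction l generalizing B with
  | nil => simpa
  | cons a t ih =>
    apply ih
    unfold step
    split
    · assumption
    · exact hB

lemma not_irrel_of_mem (l : List (Fin d)) (B : Finset (Fin d)) (i : Fin d)
    (hi : i ∈ l) (hni : i ∉ l.foldl (step f x ε δ) B) :
    ∃ B' : Finset (Fin d), B' ⊆ l.foldl (step f x ε δ) B ∧
      ¬ Irrelevant f x ε δ ↑(insert i B') := by
  induction l generalizing B with
  | nil => simp at hi
  | cons a t ih =>
    rcases List.mem_cons.mp hi with rfl | hmem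
    · by_cases hirr : Irrelevant f x ε δ ↑(insert i B)
      · exfalso
        apply hni
        have : i ∈ step f x ε δ B i := by
          unfold step; rw [if_pos hirr]; exact Finset.mem_insert_self _ _
        exact subset_foldl f x ε δ t _ this
      · refine ⟨B, ?_, hirr⟩
        have hstep : step f x ε δ B i = B := by unfold step; rw [if_neg hirr]
        simpa [List.foldl_cons, hstep] using subset_foldl f x ε δ t B
    · exact ih _ hmem hni

end fold

theorem stmt15 {d : ℕ} (w : Fin d → ℝ) (b : ℝ) (x : Fin d → ℝ) (ε δ : ℝ)
    (hε : 0 < ε) (hδ : 0 ≤ δ) (π : List (Fin d)) (hnodup : π.Nodup)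
    (hall : ∀ i : Fin d, i ∈ π) :
    RobustExpl (fun y => (∑ k, w k * y k) + b) x ε δ
        ↑(Finset.univ \ verixB (fun y => (∑ k, w k * y k) + b) x ε δ π) ∧
      ∀ i ∈ Finset.univ \ verixB (fun y => (∑ k, w k * y k) + b) x ε δ π,
        δ < ε * (|w i| +
          ∑ j ∈ verixB (fun y => (∑ k, w k * y k) + b) x ε δ π, |w j|) := by
  set f : (Fin d → ℝ) → ℝ := fun y => (∑ k, w k * y k) + b with hf
  have hverix : verixB f x ε δ π = π.foldl (step f x ε δ) ∅ := rfl
  set Bf := π.foldl (step f x ε δ) ∅ with hBf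
  have hirr0 : Irrelevant f x ε δ ↑(∅ : Finset (Fin d)) := by
    rw [hf, irrel_iff w b x ε δ hε]
    simpa using hδ
  have hirrBf : Irrelevant f x ε δ ↑Bf := irrel_foldl f x ε δ π ∅ hirr0
  have hBfsum : ε * ∑ j ∈ Bf, |w j| ≤ δ := (irrel_iff w b x ε δ hε Bf).mp hirrBf
  constructor
  · intro x' h1 h2
    apply hirrBf x'
    · intro i hi
      exact h2 i (by simp [hverix]; simpa using hi)
    · intro i hi
      exact h1 i (by simp [hverix]; simpa using hi)
  · intro i hi
    rw [hverix] at hi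
    simp only [Finset.mem_sdiff, Finset.mem_univ, true_and] at hi
    obtain ⟨B', hB'sub, hB'ni⟩ := not_irrel_of_mem f x ε δ π ∅ i (hall i) hi
    rw [hf, irrel_iff w b x ε δ hε, not_le] at hB'ni
    have hsub : insert i B' ⊆ insert i Bf := Finset.insert_subset_insert i hB'sub
    have hsum1 : ∑ j ∈ insert i B', |w j| ≤ ∑ j ∈ insert i Bf, |w j| :=
      Finset.sum_le_sum_of_subset_of_nonneg hsub (fun j _ _ => abs_nonneg _)
    have hsum2 : ∑ j ∈ insert i Bf, |w j| = |w i| + ∑ j ∈ Bf, |w j| :=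
      Finset.sum_insert hi
    calc δ < ε * ∑ j ∈ insert i B', |w j| := hB'ni
      _ ≤ ε * (|w i| + ∑ j ∈ Bf, |w j|) := by
          rw [← hsum2]; exact mul_le_mul_of_nonneg_left hsum1 hε.le
end

section
/- For the linear model f(x) = ∑ i, w i * x i + b, if the weights satisfy |w_{π(1)}| ≤ |w_{π(2)}| ≤ ... ≤ |w_{π(d)}| and VeriX traverses indices in the order π (least sensitive first), then the returned irrelevant set B is a maximum-cardinality irrelevant set: for any irrelevant set B', |B'| ≤ |B|. Equivalently, the returned explanation A has globally minimum cardinality among all robust explanations. -/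
open Finset

section Greedy

variable {α : Type*} [DecidableEq α]

def greedyAugment (P : Finset α → Prop) [DecidablePred P] (L : List α) (B : Finset α) :
    Finset α :=
  L.foldl (fun B i => if P (insert i B) then insert i B else B) B

variable (P : Finset α → Prop) [DecidablePred P]

theorem subset_greedyAugment (L : List α) (B : Finset α) : B ⊆ greedyAugment P L B := by
  induction L generalizing B with
  | nil => exact subset_rfl
  | cons a L ih =>
    refine subset_trans ?_ (ih _)
    dsimp only
    split_ifs
    · exact subset_insert a B
    · exact subset_rfl

theorem union_take_subset_greedyAugment (hP : ∀ ⦃s t⦄, s ⊆ t → P t → P s)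
    (L : List α) (k : ℕ) (B : Finset α) (h : P (B ∪ (L.take k).toFinset)) :
    B ∪ (L.take k).toFinset ⊆ greedyAugment P L B := by
  induction L generalizing B k with
  | nil => simpa using subset_greedyAugment P [] B
  | cons a L ih =>
    cases k with
    | zero => simpa using subset_greedyAugment P (a :: L) B
    | succ k =>
      rw [List.take_succ_cons, List.toFinset_cons, union_insert, ← insert_union] at h ⊢
      have hins : P (insert a B) := hP subset_union_left h
      show _ ⊆ greedyAugment P L (if P (insert a B) then insert a B else B)
      rw [if_pos hins]
      exact ih k _ h

end Greedy

theorem Finset.sum_le_sum_of_card_eq {ι M : Type*} [DecidableEq ι] [AddCommMonoid M]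
    [LinearOrder M] [IsOrderedAddMonoid M] {s t : Finset ι} {f : ι → M} (hcard : #s = #t)
    (hf : ∀ i ∈ s \ t, ∀ j ∈ t \ s, f i ≤ f j) : ∑ i ∈ s, f i ≤ ∑ j ∈ t, f j := by
  rw [← sum_inter_add_sum_sdiff s t, ← sum_inter_add_sum_sdiff t s, inter_comm t s]
  have hcard' : #(s \ t) = #(t \ s) := card_sdiff_eq_card_sdiff_iff.2 hcard
  refine add_le_add le_rfl ?_
  rcases (s \ t).eq_empty_or_nonempty with hst | hne
  · have hts : t \ s = ∅ := by rw [← card_eq_zero, ← hcard', hst, card_empty]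
    simp [hst, hts]
  · -- `f i₀` bounds `f` on `s \ t` from above and on `t \ s` from below
    obtain ⟨i₀, hi₀, hmax⟩ := exists_max_image (s \ t) f hne
    calc ∑ i ∈ s \ t, f i ≤ #(s \ t) • f i₀ := sum_le_card_nsmul _ _ _ hmax
      _ = #(t \ s) • f i₀ := by rw [hcard']
      _ ≤ ∑ j ∈ t \ s, f j := card_nsmul_le_sum _ _ _ (hf i₀ hi₀)

theorem List.card_toFinset_take {ι : Type*} [DecidableEq ι] {L : List ι} (hL : L.Nodup)
    {k : ℕ} (hk : k ≤ L.length) : #(L.take k).toFinset = k := by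
  rw [toFinset_card_of_nodup (hL.sublist (take_sublist k L)), length_take, min_eq_left hk]

theorem List.sum_take_card_le_sum {ι M : Type*} [DecidableEq ι] [AddCommMonoid M]
    [LinearOrder M] [IsOrderedAddMonoid M] {f : ι → M} {L : List ι} (hL : L.Nodup)
    (hsorted : L.Pairwise (fun i j => f i ≤ f j)) {s : Finset ι} (hs : s ⊆ L.toFinset) :
    ∑ i ∈ (L.take #s).toFinset, f i ≤ ∑ i ∈ s, f i := by
  have hk : #s ≤ L.length := (card_le_card hs).trans (toFinset_card_le L)
  refine Finset.sum_le_sum_of_card_eq (L.card_toFinset_take hL hk) fun i hi j hj => ?_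
  simp only [Finset.mem_sdiff, mem_toFinset] at hi hj
  have hjL : j ∈ L.take #s ++ L.drop #s := by
    rw [take_append_drop]; exact mem_toFinset.1 (hs hj.1)
  rw [← take_append_drop #s L, pairwise_append] at hsorted
  exact hsorted.2.2 i hi.1 j ((mem_append.1 hjL).resolve_left hj.2)

section Irrelevance

variable {d : ℕ} {x : Fin d → ℝ} {ε δ : ℝ}

theorem Irrelevant.mono {f : (Fin d → ℝ) → ℝ} {S T : Set (Fin d)} (hε : 0 ≤ ε) (hST : S ⊆ T)
    (hT : Irrelevant f x ε δ T) : Irrelevant f x ε δ S := by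
  intro x' hS hSc
  refine hT x' (fun i _ => ?_) (fun i hi => hSc i fun h => hi (hST h))
  by_cases hi : i ∈ S
  · exact hS i hi
  · rw [hSc i hi, sub_self, abs_zero]; exact hε

theorem irrelevant_linear_iff (w : Fin d → ℝ) (b : ℝ) (hε : 0 ≤ ε) (B : Finset (Fin d)) :
    Irrelevant (fun y => (∑ k, w k * y k) + b) x ε δ ↑B ↔ ε * ∑ i ∈ B, |w i| ≤ δ := by
  have hdiff : ∀ x' : Fin d → ℝ, (∀ i ∉ (B : Set (Fin d)), x' i = x i) →
      (∑ k, w k * x' k + b) - (∑ k, w k * x k + b) = ∑ k ∈ B, w k * (x' k - x k) := by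
    intro x' hx'
    calc _ = ∑ k, w k * (x' k - x k) := by simp only [mul_sub, sum_sub_distrib]; ring
      _ = _ := (sum_subset (subset_univ B) fun k _ hk => by
          rw [hx' k (by simpa using hk), sub_self, mul_zero]).symm
  constructor
  · intro h
    set x' : Fin d → ℝ := fun i => if i ∈ B then x i + ε * SignType.sign (w i) else x i
    have hout : ∀ i ∉ (B : Set (Fin d)), x' i = x i := fun i hi => if_neg hi
    have hin : ∀ i ∈ (B : Set (Fin d)), |x' i - x i| ≤ ε := fun i hi => by
      simp only [x', if_pos (mem_coe.1 hi), add_sub_cancel_left]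
      rcases lt_trichotomy (w i) 0 with hw | hw | hw <;> simp [hw, abs_of_nonneg hε, hε]
    calc ε * ∑ i ∈ B, |w i| = ∑ k ∈ B, w k * (x' k - x k) := by
          rw [mul_sum]
          refine sum_congr rfl fun k hk => ?_
          simp only [x', if_pos hk, add_sub_cancel_left, mul_left_comm, self_mul_sign]
      _ ≤ |∑ k ∈ B, w k * (x' k - x k)| := le_abs_self _
      _ ≤ δ := hdiff x' hout ▸ h x' hin hout
  · intro h x' hin hout
    rw [hdiff x' hout]
    calc |∑ k ∈ B, w k * (x' k - x k)| ≤ ∑ k ∈ B, |w k| * ε :=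
          (abs_sum_le_sum_abs _ _).trans <| sum_le_sum fun k hk => by
            rw [abs_mul]; exact mul_le_mul_of_nonneg_left (hin k hk) (abs_nonneg _)
      _ = ε * ∑ i ∈ B, |w i| := by rw [← sum_mul, mul_comm]
      _ ≤ δ := h

open scoped Classical in
theorem verixB_eq_greedyAugment (f : (Fin d → ℝ) → ℝ) (π : List (Fin d)) :
    verixB f x ε δ π = greedyAugment (fun B => Irrelevant f x ε δ ↑B) π ∅ :=
  rfl

end Irrelevance

theorem stmt16 {d : ℕ} (w : Fin d → ℝ) (b : ℝ) (x : Fin d → ℝ) (ε δ : ℝ)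
    (hε : 0 < ε) (π : List (Fin d)) (hnodup : π.Nodup) (hall : ∀ i : Fin d, i ∈ π)
    (hsorted : π.Pairwise (fun i j => |w i| ≤ |w j|)) :
    ∀ B' : Finset (Fin d),
      Irrelevant (fun y => (∑ k, w k * y k) + b) x ε δ ↑B' →
        B'.card ≤ (verixB (fun y => (∑ k, w k * y k) + b) x ε δ π).card := by
  classical
  intro B' hB'
  set T := (π.take #B').toFinset
  have hB'π : B' ⊆ π.toFinset := fun i _ => List.mem_toFinset.2 (hall i)
  have hcard : #T = #B' :=
    π.card_toFinset_take hnodup ((card_le_card hB'π).trans π.toFinset_card_le)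
  have hT : Irrelevant (fun y => (∑ k, w k * y k) + b) x ε δ ↑T :=
    (irrelevant_linear_iff w b hε.le T).2 <|
      (mul_le_mul_of_nonneg_left (List.sum_take_card_le_sum hnodup hsorted hB'π) hε.le).trans
        ((irrelevant_linear_iff w b hε.le B').1 hB')
  have hTsub : T ⊆ verixB (fun y => (∑ k, w k * y k) + b) x ε δ π := by
    rw [verixB_eq_greedyAugment]
    have := union_take_subset_greedyAugment _
      (fun _ _ hst => Irrelevant.mono hε.le (coe_subset.2 hst)) π #B' ∅ (by rwa [empty_union])
    rwa [empty_union] at this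
  exact hcard ▸ card_le_card hTsub
end

section
/- (Order dependence) There exist a function f, input x, ε > 0 and δ such that two different traversal orders of the VeriX procedure produce explanations of different cardinalities. -/
noncomputable abbrev myf : (Fin 3 → ℝ) → ℝ := fun v => v 0 + v 1 + 2 * v 2

lemma irr0 : Irrelevant myf 0 1 2 ↑(insert (0:Fin 3) (∅:Finset (Fin 3))) := by
  intro x' h1 h2
  have e1 : x' 1 = 0 := h2 1 (by simp)
  have e2 : x' 2 = 0 := h2 2 (by simp)
  have b0 : |x' 0 - 0| ≤ 1 := h1 0 (by simp)
  simp only [myf, Pi.zero_apply, e1, e2]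
  rw [abs_le] at *
  constructor <;> nlinarith [b0.1, b0.2]

lemma irr01 : Irrelevant myf 0 1 2
    ↑(insert (1:Fin 3) (insert (0:Fin 3) (∅:Finset (Fin 3)))) := by
  intro x' h1 h2
  have e2 : x' 2 = 0 := h2 2 (by decide)
  have b0 : |x' 0 - 0| ≤ 1 := h1 0 (by simp)
  have b1 : |x' 1 - 0| ≤ 1 := h1 1 (by simp)
  simp only [myf, Pi.zero_apply, e2]
  rw [abs_le] at *
  constructor <;> nlinarith [b0.1, b0.2, b1.1, b1.2]

lemma irr2 : Irrelevant myf 0 1 2 ↑(insert (2:Fin 3) (∅:Finset (Fin 3))) := by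
  intro x' h1 h2
  have e0 : x' 0 = 0 := h2 0 (by decide)
  have e1 : x' 1 = 0 := h2 1 (by decide)
  have b2 : |x' 2 - 0| ≤ 1 := h1 2 (by simp)
  simp only [myf, Pi.zero_apply, e0, e1]
  rw [abs_le] at *
  constructor <;> nlinarith [b2.1, b2.2]

lemma notirr (B : Finset (Fin 3)) (hB : ((if (0:Fin 3) ∈ B then (1:ℝ) else 0)
    + (if (1:Fin 3) ∈ B then (1:ℝ) else 0)
    + 2 * (if (2:Fin 3) ∈ B then (1:ℝ) else 0)) > 2) :
    ¬ Irrelevant myf 0 1 2 ↑B := by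
  intro h
  classical
  set x' : Fin 3 → ℝ := fun i => if i ∈ B then 1 else 0 with hx'
  have := h x' (by
      intro i hi
      rw [Finset.mem_coe] at hi
      simp [x', hi])
    (by
      intro i hi
      rw [Finset.mem_coe] at hi
      simp [x', hi])
  have hv : myf x' = (if (0:Fin 3) ∈ B then (1:ℝ) else 0)
      + (if (1:Fin 3) ∈ B then (1:ℝ) else 0)
      + 2 * (if (2:Fin 3) ∈ B then (1:ℝ) else 0) := by
    simp [myf, x']
  rw [hv] at this
  simp only [Pi.zero_apply, myf] at this
  rw [abs_le] at this
  linarith [this.2]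

theorem stmt18 :
    ∃ (d : ℕ) (f : (Fin d → ℝ) → ℝ) (x : Fin d → ℝ) (ε δ : ℝ)
      (π₁ π₂ : List (Fin d)),
      0 < ε ∧ π₁.Nodup ∧ π₂.Nodup ∧ (∀ i : Fin d, i ∈ π₁) ∧ (∀ i : Fin d, i ∈ π₂) ∧
        (Finset.univ \ verixB f x ε δ π₁).card ≠
          (Finset.univ \ verixB f x ε δ π₂).card := by
  classical
  refine ⟨3, myf, 0, 1, 2, [2, 0, 1], [0, 1, 2], one_pos, by decide, by decide,
    by decide, by decide, ?_⟩
  have n02 : ¬ Irrelevant myf 0 1 2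
      ↑(insert (0:Fin 3) (insert (2:Fin 3) (∅:Finset (Fin 3)))) := by
    apply notirr
    norm_num [Finset.mem_insert, Fin.ext_iff]
  have n12 : ¬ Irrelevant myf 0 1 2
      ↑(insert (1:Fin 3) (insert (2:Fin 3) (∅:Finset (Fin 3)))) := by
    apply notirr
    norm_num [Finset.mem_insert, Fin.ext_iff]
  have n012 : ¬ Irrelevant myf 0 1 2
      ↑(insert (2:Fin 3) (insert (1:Fin 3) (insert (0:Fin 3) (∅:Finset (Fin 3))))) := by
    apply notirr
    norm_num [Finset.mem_insert, Fin.ext_iff]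
  have e2 := if_pos (c := Irrelevant myf 0 1 2 ↑(insert (2:Fin 3) (∅:Finset (Fin 3)))) irr2 (h := Classical.propDecidable _)
    (t := insert (2:Fin 3) (∅:Finset (Fin 3))) (e := (∅:Finset (Fin 3)))
  have e0 := if_pos (c := Irrelevant myf 0 1 2 ↑(insert (0:Fin 3) (∅:Finset (Fin 3)))) irr0 (h := Classical.propDecidable _)
    (t := insert (0:Fin 3) (∅:Finset (Fin 3))) (e := (∅:Finset (Fin 3)))
  have h1 : verixB myf 0 1 2 [2, 0, 1] = {2} := by
    simp only [verixB, List.foldl, e2, if_neg n02, if_neg n12]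
    rfl
  have h2 : verixB myf 0 1 2 [0, 1, 2] = {0, 1} := by
    simp only [verixB, List.foldl, e0, if_pos irr01, if_neg n012]
    decide
  rw [h1, h2]
  decide
end

section
/- If the irrelevance oracle used by VeriX is sound but incomplete (it may answer 'unknown', treated as a failed test), then the returned set A is still a robust explanation, i.e., its complement is irrelevant for (f, x, ε, δ). -/
def verixOB {d : ℕ} (O : Set (Fin d) → Bool) (π : List (Fin d)) : Finset (Fin d) :=
  π.foldl (fun B i => if O ↑(insert i B) then insert i B else B) ∅

lemma foldl_inv {d : ℕ} (f : (Fin d → ℝ) → ℝ) (x : Fin d → ℝ) (ε δ : ℝ)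
    (O : Set (Fin d) → Bool)
    (hsound : ∀ S : Set (Fin d), O S = true → Irrelevant f x ε δ S) :
    ∀ (π : List (Fin d)) (B : Finset (Fin d)), Irrelevant f x ε δ ↑B →
      Irrelevant f x ε δ ↑((π.foldl (fun B i => if O ↑(insert i B) then insert i B else B) B : Finset (Fin d))) := by
  intro π
  induction π with
  | nil => intro B hB; simpa using hB
  | cons a l ih =>
    intro B hB
    rw [List.foldl_cons]
    by_cases h : O ↑(insert a B) = true
    · rw [if_pos h]; exact ih _ (hsound _ h)
    · rw [if_neg h]; exact ih _ hB

theorem stmt19 {d : ℕ} (f : (Fin d → ℝ) → ℝ) (x : Fin d → ℝ) (ε δ : ℝ)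
    (hδ : 0 ≤ δ) (O : Set (Fin d) → Bool)
    (hsound : ∀ S : Set (Fin d), O S = true → Irrelevant f x ε δ S)
    (π : List (Fin d)) : Irrelevant f x ε δ ↑(verixOB O π) := by
  have h0 : Irrelevant f x ε δ ↑(∅ : Finset (Fin d)) := by
    intro x' _ h2
    have : x' = x := funext fun i => h2 i (by simp)
    simp [this, hδ]
  exact foldl_inv f x ε δ O hsound π ∅ h0
end
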